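/- Let 0 = x_0 < … < x_N = 1 be a mesh, ε > 0, and b, c : [0,1] → ℝ continuous. For every u ∈ C³[0,1] and every index 1 ≤ i ≤ N−1 with h_i ≤ h_{i+1}, the consistency error satisfies |τ_i[u]| ≤ C h_{i+1} ( ε · max_{x ∈ [x_{i−1}, x_{i+1}]} |u‴(x)| + max_{x ∈ [x_{i−1}, x_{i+1}]} |u″(x)| ), where C depends only on max|b|. -/

import Mathlib

/-!
Expand `u` about `x_i` by Taylor's formula with Lagrange remainder. The forward difference
misses `u'(x_i)` by at most `h_{i+1} ‖u''‖ / 2`, and the second difference misses `u''(x_i)` by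
at most `‖u'''‖ (h_i² + h_{i+1}²) / (3 (h_i + h_{i+1})) ≤ h_{i+1} ‖u'''‖ / 3`, using
`h_i ≤ h_{i+1}`. The reaction terms cancel in `τ_i`, so any bound for `|b|` plus one serves as `C`.
-/

/-- The consistency error `τ_i[u]` of the upwind scheme at an interior mesh point. -/
noncomputable def tau (b c : ℝ → ℝ) (ε : ℝ) (x : ℕ → ℝ) (u : ℝ → ℝ) (i : ℕ) : ℝ :=
  let h : ℕ → ℝ := fun k => x k - x (k - 1)
  let hb : ℝ := (h i + h (i + 1)) / 2
  let D1 : ℝ := (u (x (i + 1)) - u (x i)) / h (i + 1)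
  let D2 : ℝ := ((u (x (i + 1)) - u (x i)) / h (i + 1) - (u (x i) - u (x (i - 1))) / h i) / hb
  (-ε * D2 - b (x i) * D1 + c (x i) * u (x i)) -
    (-ε * iteratedDeriv 2 u (x i) - b (x i) * deriv u (x i) + c (x i) * u (x i))

/-- Supremum of `|g|` over a set. -/
noncomputable def supAbs (g : ℝ → ℝ) (s : Set ℝ) : ℝ := sSup ((fun t => |g t|) '' s)

open Set
open scoped Nat

theorem abs_sub_taylorSum_le {f : ℝ → ℝ} {n : ℕ} (hf : ContDiff ℝ (n + 1) f) {x₀ x M : ℝ}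
    (hM : ∀ t ∈ uIcc x₀ x, |iteratedDeriv (n + 1) f t| ≤ M) :
    |f x - ∑ k ∈ Finset.range (n + 1), iteratedDeriv k f x₀ * (x - x₀) ^ k / k !| ≤
      M * |x - x₀| ^ (n + 1) / (n + 1)! := by
  rcases eq_or_ne x₀ x with rfl | hx
  · simp [Finset.sum_range_succ']
  obtain ⟨ξ, hξ, hrem⟩ := taylor_mean_remainder_lagrange_iteratedDeriv hx hf.contDiffOn
  have hpoly : taylorWithinEval f n (uIcc x₀ x) x₀ x =
      ∑ k ∈ Finset.range (n + 1), iteratedDeriv k f x₀ * (x - x₀) ^ k / k ! := by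
    rw [taylor_within_apply]
    refine Finset.sum_congr rfl fun k hk => ?_
    rw [iteratedDerivWithin_eq_iteratedDeriv (uniqueDiffOn_uIcc hx)
      (hf.contDiffAt.of_le ?_) left_mem_uIcc, smul_eq_mul]
    · ring
    · exact_mod_cast (Finset.mem_range_succ_iff.mp hk).trans n.le_succ
  rw [← hpoly, hrem, abs_div, abs_mul, abs_pow, abs_of_pos (by positivity : (0 : ℝ) < (n + 1)!)]
  gcongr
  exact hM ξ (uIoo_subset_uIcc_self hξ)

theorem abs_slope_sub_deriv_le {u : ℝ → ℝ} (hu : ContDiff ℝ 2 u) {a b M : ℝ} (hab : a < b)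
    (hM : ∀ t ∈ Icc a b, |iteratedDeriv 2 u t| ≤ M) :
    |(u b - u a) / (b - a) - deriv u a| ≤ M / 2 * (b - a) := by
  have hpos : 0 < b - a := sub_pos.mpr hab
  have h := abs_sub_taylorSum_le (n := 1) hu (x₀ := a) (x := b) (by rwa [uIcc_of_lt hab])
  norm_num [Finset.sum_range_succ, abs_of_pos hpos] at h
  rw [show (u b - u a) / (b - a) - deriv u a = (u b - (u a + deriv u a * (b - a))) / (b - a) by
    field_simp; ring, abs_div, abs_of_pos hpos, div_le_iff₀ hpos]
  linarith

theorem abs_secondDiff_sub_iteratedDeriv_two_le {u : ℝ → ℝ} (hu : ContDiff ℝ 3 u) {xm a xp M : ℝ}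
    (hm : xm < a) (hp : a < xp) (hle : a - xm ≤ xp - a)
    (hM : ∀ t ∈ Icc xm xp, |iteratedDeriv 3 u t| ≤ M) :
    |((u xp - u a) / (xp - a) - (u a - u xm) / (a - xm)) / ((a - xm + (xp - a)) / 2) -
        iteratedDeriv 2 u a| ≤ M / 3 * (xp - a) := by
  have hm0 : 0 < a - xm := sub_pos.mpr hm
  have hp0 : 0 < xp - a := sub_pos.mpr hp
  have hM0 : 0 ≤ M := (abs_nonneg _).trans (hM a ⟨hm.le, hp.le⟩)
  have hRp := abs_sub_taylorSum_le (n := 2) hu (x₀ := a) (x := xp) fun t ht =>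
    hM t (Icc_subset_Icc_left hm.le (uIcc_of_lt hp ▸ ht))
  have hRm := abs_sub_taylorSum_le (n := 2) hu (x₀ := a) (x := xm) fun t ht =>
    hM t (Icc_subset_Icc_right hp.le (uIcc_of_gt hm ▸ ht))
  norm_num [Finset.sum_range_succ, abs_of_pos hp0, abs_of_neg (sub_neg.mpr hm)] at hRp hRm
  set Rp := u xp - (u a + deriv u a * (xp - a) + iteratedDeriv 2 u a * (xp - a) ^ 2 / 2)
  set Rm := u xm - (u a + deriv u a * (xm - a) + iteratedDeriv 2 u a * (xm - a) ^ 2 / 2)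
  have hid : ((u xp - u a) / (xp - a) - (u a - u xm) / (a - xm)) / ((a - xm + (xp - a)) / 2) -
      iteratedDeriv 2 u a = (Rp / (xp - a) + Rm / (a - xm)) / ((a - xm + (xp - a)) / 2) := by
    simp only [Rp, Rm]
    field_simp
    ring
  have hmid : 0 < (a - xm + (xp - a)) / 2 := by linarith
  rw [hid, abs_div, abs_of_pos hmid, div_le_iff₀ hmid]
  clear_value Rp Rm
  have hp' : |Rp / (xp - a)| ≤ M * (xp - a) ^ 2 / 6 := by
    rw [abs_div, abs_of_pos hp0, div_le_iff₀ hp0]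
    linarith
  have hm' : |Rm / (a - xm)| ≤ M * (a - xm) ^ 2 / 6 := by
    rw [abs_div, abs_of_pos hm0, div_le_iff₀ hm0]
    linarith
  -- `h_i² + h_{i+1}² ≤ h_{i+1} (h_i + h_{i+1})` because `h_i ≤ h_{i+1}`.
  nlinarith [abs_add_le (Rp / (xp - a)) (Rm / (a - xm)),
    mul_nonneg (mul_nonneg hM0 hm0.le) (sub_nonneg.mpr hle)]

theorem supAbs_nonneg (g : ℝ → ℝ) (s : Set ℝ) : 0 ≤ supAbs g s :=
  Real.sSup_nonneg <| by
    rintro _ ⟨t, -, rfl⟩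
    exact abs_nonneg _

theorem abs_le_supAbs {g : ℝ → ℝ} {s : Set ℝ} (hs : IsCompact s) (hg : ContinuousOn g s)
    {t : ℝ} (ht : t ∈ s) : |g t| ≤ supAbs g s :=
  le_csSup (hs.image_of_continuousOn hg.abs).bddAbove ⟨t, ht, rfl⟩

theorem abs_upwindError_le {u : ℝ → ℝ} (hu : ContDiff ℝ 3 u) {xm a xp ε β M₂ M₃ : ℝ}
    (hε : 0 ≤ ε) (hm : xm < a) (hp : a < xp) (hle : a - xm ≤ xp - a)
    (hM₃ : ∀ t ∈ Icc xm xp, |iteratedDeriv 3 u t| ≤ M₃)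
    (hM₂ : ∀ t ∈ Icc xm xp, |iteratedDeriv 2 u t| ≤ M₂) :
    |-ε * (((u xp - u a) / (xp - a) - (u a - u xm) / (a - xm)) / ((a - xm + (xp - a)) / 2) -
        iteratedDeriv 2 u a) - β * ((u xp - u a) / (xp - a) - deriv u a)| ≤
      (|β| + 1) * (xp - a) * (ε * M₃ + M₂) := by
  have hD₂ := abs_secondDiff_sub_iteratedDeriv_two_le hu hm hp hle hM₃
  have hD₁ := abs_slope_sub_deriv_le (hu.of_le (by norm_num)) hp
    fun t ht => hM₂ t (Icc_subset_Icc_left hm.le ht)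
  have hM₃0 := (abs_nonneg _).trans (hM₃ a ⟨hm.le, hp.le⟩)
  have hM₂0 := (abs_nonneg _).trans (hM₂ a ⟨hm.le, hp.le⟩)
  have hh : 0 ≤ xp - a := sub_nonneg.mpr hp.le
  set D₂ := ((u xp - u a) / (xp - a) - (u a - u xm) / (a - xm)) / ((a - xm + (xp - a)) / 2) -
    iteratedDeriv 2 u a
  set D₁ := (u xp - u a) / (xp - a) - deriv u a
  calc |-ε * D₂ - β * D₁| ≤ |-ε * D₂| + |β * D₁| := abs_sub _ _
    _ = ε * |D₂| + |β| * |D₁| := by rw [abs_mul, abs_mul, abs_neg, abs_of_nonneg hε]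
    _ ≤ ε * (M₃ / 3 * (xp - a)) + |β| * (M₂ / 2 * (xp - a)) := by gcongr
    _ ≤ (|β| + 1) * (xp - a) * (ε * M₃ + M₂) := by
      have hεM₃ := mul_nonneg (mul_nonneg hε hM₃0) hh
      nlinarith [mul_nonneg (abs_nonneg β) hεM₃, mul_nonneg (mul_nonneg (abs_nonneg β) hM₂0) hh,
        mul_nonneg hM₂0 hh]

theorem tau_eq (b c : ℝ → ℝ) (ε : ℝ) (x : ℕ → ℝ) (u : ℝ → ℝ) (i : ℕ) :
    tau b c ε x u i =
      -ε * ((((u (x (i + 1)) - u (x i)) / (x (i + 1) - x i) -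
          (u (x i) - u (x (i - 1))) / (x i - x (i - 1))) /
          ((x i - x (i - 1) + (x (i + 1) - x i)) / 2) - iteratedDeriv 2 u (x i))) -
        b (x i) * ((u (x (i + 1)) - u (x i)) / (x (i + 1) - x i) - deriv u (x i)) := by
  simp only [tau, Nat.add_sub_cancel]
  ring

theorem stmt_15_general (b c : ℝ → ℝ) (hb : ContinuousOn b (Set.Icc 0 1)) :
    ∃ C : ℝ, 0 < C ∧
      ∀ (ε : ℝ) (N : ℕ) (x : ℕ → ℝ) (u : ℝ → ℝ) (i : ℕ),
        0 < ε → 2 ≤ N → x 0 = 0 → x N = 1 → (∀ k < N, x k < x (k + 1)) →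
        ContDiff ℝ 3 u → 1 ≤ i → i + 1 ≤ N →
        x i - x (i - 1) ≤ x (i + 1) - x i →
        |tau b c ε x u i| ≤
          C * (x (i + 1) - x i) *
            (ε * supAbs (iteratedDeriv 3 u) (Set.Icc (x (i - 1)) (x (i + 1))) +
              supAbs (iteratedDeriv 2 u) (Set.Icc (x (i - 1)) (x (i + 1)))) := by
  obtain ⟨B, hB⟩ := isCompact_Icc.exists_bound_of_continuousOn hb
  have hB0 : 0 ≤ B := (norm_nonneg _).trans (hB 0 ⟨le_rfl, zero_le_one⟩)
  refine ⟨B + 1, by positivity, ?_⟩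
  intro ε N x u i hε _ hx0 hxN hstep hu hi hiN hle
  have hx : StrictMonoOn x (Iic N) := strictMonoOn_Iic_of_lt_succ hstep
  have hm : x (i - 1) < x i := by
    simpa [Nat.sub_add_cancel hi] using hstep (i - 1) (by omega)
  have hp : x i < x (i + 1) := hstep i (by omega)
  have hxi : x i ∈ Icc 0 1 :=
    ⟨hx0 ▸ hx.monotoneOn (mem_Iic.mpr (Nat.zero_le N)) (mem_Iic.mpr (by omega)) (Nat.zero_le i),
      hxN ▸ hx.monotoneOn (mem_Iic.mpr (by omega)) (mem_Iic.mpr le_rfl) (by omega)⟩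
  set I := Icc (x (i - 1)) (x (i + 1))
  have hM₃ : ∀ t ∈ I, |iteratedDeriv 3 u t| ≤ supAbs (iteratedDeriv 3 u) I := fun t =>
    abs_le_supAbs isCompact_Icc (hu.continuous_iteratedDeriv 3 le_rfl).continuousOn
  have hM₂ : ∀ t ∈ I, |iteratedDeriv 2 u t| ≤ supAbs (iteratedDeriv 2 u) I := fun t =>
    abs_le_supAbs isCompact_Icc (hu.continuous_iteratedDeriv 2 (by norm_num)).continuousOn
  rw [tau_eq]
  refine (abs_upwindError_le hu hε.le hm hp hle hM₃ hM₂).trans ?_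
  gcongr
  exacts [add_nonneg (mul_nonneg hε.le (supAbs_nonneg _ _)) (supAbs_nonneg _ _), hB _ hxi]

/-- on an arbitrary mesh, for `u ∈ C³` and interior indices with
`h_i ≤ h_{i+1}`, the consistency error satisfies
`|τ_i[u]| ≤ C h_{i+1}(ε‖u‴‖_i + ‖u″‖_i)`, with `C` depending only on `max |b|`. -/
theorem stmt_15 (b c : ℝ → ℝ) (hb : ContinuousOn b (Set.Icc 0 1))
    (hc : ContinuousOn c (Set.Icc 0 1)) :
    ∃ C : ℝ, 0 < C ∧
      ∀ (ε : ℝ) (N : ℕ) (x : ℕ → ℝ) (u : ℝ → ℝ) (i : ℕ),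
        0 < ε → 2 ≤ N → x 0 = 0 → x N = 1 → (∀ k < N, x k < x (k + 1)) →
        ContDiff ℝ 3 u → 1 ≤ i → i + 1 ≤ N →
        x i - x (i - 1) ≤ x (i + 1) - x i →
        |tau b c ε x u i| ≤
          C * (x (i + 1) - x i) *
            (ε * supAbs (iteratedDeriv 3 u) (Set.Icc (x (i - 1)) (x (i + 1))) +
              supAbs (iteratedDeriv 2 u) (Set.Icc (x (i - 1)) (x (i + 1)))) :=
  stmt_15_general b c hb
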